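/- A maximal partial spread of PG(3,q) that is not a spread has size at most q^2 − 1; equivalently, there is no maximal partial spread of size exactly q^2. -/

import Mathlib

/-!
Let `q = |F|` and `N = |S|`. The lines of a partial spread have disjoint sets of `q² - 1` nonzero
vectors, so `q⁴ - 1 - N (q² - 1)` nonzero vectors of `F⁴` are uncovered; if `S` does not cover,
this is positive and `N ≤ q²`.

Let `N = q²`, so that exactly `q² - 1` vectors are uncovered. A plane `π` meets each line of `S`
in a point or contains it, so it contains `q² - 1 - m (q² - q)` uncovered vectors, where `m` is
the number of lines of `S` inside `π`. A plane through two independent uncovered vectors `u`, `v`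
contains at least `q` of them, hence `m = 0` and `π` contains every uncovered vector. The
planes through `u` and `v` meet in the line `⟨u, v⟩`, which therefore contains all the uncovered
vectors; counting shows they are exactly its nonzero vectors. Then `⟨u, v⟩` is skew to every
line of `S`, contradicting maximality.
-/

open Module

variable {K : Type*} [Field K] [Fintype K]

/-- A line of PG(3,q): a 2-dimensional subspace of K^4. -/
def IsLine (W : Submodule K (Fin 4 → K)) : Prop := finrank K W = 2

/-- A partial spread: a set of pairwise skew lines. -/
def PartialSpread (S : Set (Submodule K (Fin 4 → K))) : Prop :=
  (∀ W ∈ S, IsLine W) ∧ ∀ W ∈ S, ∀ W' ∈ S, W ≠ W' → W ⊓ W' = ⊥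

/-- S covers every point of PG(3,q). -/
def Covers (S : Set (Submodule K (Fin 4 → K))) : Prop :=
  ∀ v : Fin 4 → K, v ≠ 0 → ∃ W ∈ S, v ∈ W

/-- A spread: a partial spread covering all points. -/
def IsSpread (S : Set (Submodule K (Fin 4 → K))) : Prop := PartialSpread S ∧ Covers S

/-- A maximal partial spread: not properly contained in a larger partial spread. -/
def IsMaxPartialSpread (S : Set (Submodule K (Fin 4 → K))) : Prop :=
  PartialSpread S ∧ ∀ T, PartialSpread T → S ⊆ T → S = T

open Finset

section Counting

variable {F V : Type*} [Field F] [AddCommGroup V] [Module F V] [Fintype V]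

open Classical in
noncomputable def punctured (W : Submodule F V) : Finset V := {v | v ∈ W ∧ v ≠ 0}

theorem mem_punctured {W : Submodule F V} {v : V} : v ∈ punctured W ↔ v ∈ W ∧ v ≠ 0 := by
  simp [punctured]

theorem card_punctured [Fintype F] (W : Submodule F V) :
    (#(punctured W) : ℤ) = (Fintype.card F : ℤ) ^ finrank F W - 1 := by
  classical
  have h0 : (0 : V) ∈ ({v | v ∈ W} : Finset V) := by simp
  have hW : punctured W = ({v | v ∈ W} : Finset V).erase 0 := by
    ext v; simp [mem_punctured, and_comm]
  have h := card_erase_add_one h0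
  rw [← hW, ← Fintype.card_subtype, card_eq_pow_finrank (K := F) (V := W)] at h
  rw [← Nat.cast_pow, ← h]
  push_cast
  ring

open Classical in
noncomputable def uncovered (S : Set (Submodule F V)) : Finset V :=
  {v | v ≠ 0 ∧ ∀ W ∈ S, v ∉ W}

theorem mem_uncovered {S : Set (Submodule F V)} {v : V} :
    v ∈ uncovered S ↔ v ≠ 0 ∧ ∀ W ∈ S, v ∉ W := by
  simp [uncovered]

theorem punctured_span_singleton_subset_uncovered {S : Set (Submodule F V)} {u : V}
    (hu : u ∈ uncovered S) : punctured (F ∙ u) ⊆ uncovered S := by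
  intro x hx
  obtain ⟨hxu, hx0⟩ := mem_punctured.mp hx
  obtain ⟨c, rfl⟩ := Submodule.mem_span_singleton.mp hxu
  have hc : c ≠ 0 := by rintro rfl; simp at hx0
  refine mem_uncovered.mpr ⟨hx0, fun W hW hcu => ?_⟩
  exact (mem_uncovered.mp hu).2 W hW ((W.smul_mem_iff hc).mp hcu)

open Classical in
theorem sum_card_punctured_inf_add_card_uncovered (S : Set (Submodule F V)) [Fintype S]
    (hS : S.Pairwise fun W W' => W ⊓ W' = ⊥) (π : Submodule F V) :
    ∑ W : S, #(punctured ((W : Submodule F V) ⊓ π)) + #{v ∈ uncovered S | v ∈ π}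
      = #(punctured π) := by
  have hdisj : ((univ : Finset S) : Set S).PairwiseDisjoint
      fun W => punctured ((W : Submodule F V) ⊓ π) := by
    intro W _ W' _ hne
    refine disjoint_left.mpr fun v hv hv' => ?_
    have hvW : v ∈ (W : Submodule F V) ⊓ W' :=
      ⟨(mem_punctured.mp hv).1.1, (mem_punctured.mp hv').1.1⟩
    rw [hS W.2 W'.2 (Subtype.coe_ne_coe.mpr hne)] at hvW
    exact (mem_punctured.mp hv).2 ((Submodule.mem_bot F).mp hvW)
  have hsub : univ.biUnion (fun W : S => punctured ((W : Submodule F V) ⊓ π)) ⊆ punctured π :=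
    biUnion_subset.mpr fun W _ v hv =>
      mem_punctured.mpr ⟨(mem_punctured.mp hv).1.2, (mem_punctured.mp hv).2⟩
  have hcompl : punctured π \ univ.biUnion (fun W : S => punctured ((W : Submodule F V) ⊓ π))
      = {v ∈ uncovered S | v ∈ π} := by
    ext v
    simp only [mem_sdiff, mem_biUnion, mem_univ, true_and, mem_filter, mem_uncovered,
      mem_punctured, Submodule.mem_inf, not_exists, Subtype.forall]
    grind
  rw [← card_sdiff_add_card_eq_card hsub, hcompl, card_biUnion hdisj, add_comm]

end Counting

section LinearAlgebra

variable {F V : Type*} [Field F] [AddCommGroup V] [Module F V] [FiniteDimensional F V]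

theorem exists_hyperplane_le_notMem {L : Submodule F V} {x : V} (hx : x ∉ L) :
    ∃ π : Submodule F V, finrank F π + 1 = finrank F V ∧ L ≤ π ∧ x ∉ π := by
  obtain ⟨f, hfx, hLf⟩ := L.exists_dual_map_eq_bot_of_notMem hx inferInstance
  have hrange : LinearMap.range f = ⊤ :=
    LinearMap.range_eq_top.mpr fun c => ⟨(c / f x) • x, by simp [hfx]⟩
  refine ⟨LinearMap.ker f, ?_, LinearMap.le_ker_iff_map.mpr hLf, hfx⟩
  rw [← LinearMap.finrank_range_add_finrank_ker f, hrange, finrank_top, finrank_self, add_comm]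

theorem finrank_inf_eq_one_of_not_le {W π : Submodule F V} (hW : finrank F W = 2)
    (hπ : finrank F π + 1 = finrank F V) (hWπ : ¬ W ≤ π) : finrank F ↥(W ⊓ π) = 1 := by
  have hsum := Submodule.finrank_sup_add_finrank_inf_eq W π
  have hsup := (W ⊔ π).finrank_le
  have hlt : finrank F ↥(W ⊓ π) < finrank F W :=
    Submodule.finrank_lt_finrank_of_lt (inf_lt_left.mpr hWπ)
  omega

end LinearAlgebra

section PartialSpread

variable {F : Type*} [Field F]

open Classical in
theorem card_punctured_inf_plane [Fintype F] {W π : Submodule F (Fin 4 → F)} (hW : IsLine W)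
    (hπ : finrank F π = 3) :
    (#(punctured (W ⊓ π)) : ℤ) =
      Fintype.card F - 1 + if W ≤ π then (Fintype.card F : ℤ) ^ 2 - Fintype.card F else 0 := by
  rw [card_punctured]
  split_ifs with hWπ
  · rw [inf_eq_left.mpr hWπ, show finrank F W = 2 from hW]
    ring
  · rw [finrank_inf_eq_one_of_not_le hW (by rw [hπ, finrank_fin_fun]) hWπ, pow_one, add_zero]

theorem PartialSpread.pairwise_inf_eq_bot {S : Set (Submodule F (Fin 4 → F))}
    (hS : PartialSpread S) : S.Pairwise fun W W' => W ⊓ W' = ⊥ :=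
  fun W hW W' hW' hne => hS.2 W hW W' hW' hne

theorem PartialSpread.card_uncovered [Fintype F] {S : Set (Submodule F (Fin 4 → F))} [Fintype S]
    (hS : PartialSpread S) :
    (#(uncovered S) : ℤ) =
      (Fintype.card F : ℤ) ^ 4 - 1 - Fintype.card S * ((Fintype.card F : ℤ) ^ 2 - 1) := by
  have hcount := congrArg (Nat.cast : ℕ → ℤ)
    (sum_card_punctured_inf_add_card_uncovered S hS.pairwise_inf_eq_bot ⊤)
  have hline (W : S) : (#(punctured ((W : Submodule F (Fin 4 → F)) ⊓ ⊤)) : ℤ) =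
      (Fintype.card F : ℤ) ^ 2 - 1 := by
    rw [inf_top_eq, card_punctured, show finrank F W = 2 from hS.1 W W.2]
  simp only [Submodule.mem_top, filter_true] at hcount
  push_cast at hcount
  rw [sum_congr rfl fun W _ => hline W, sum_const, card_univ, nsmul_eq_mul, card_punctured,
    finrank_top, finrank_fin_fun] at hcount
  linear_combination hcount

open Classical in
theorem PartialSpread.card_uncovered_inf_plane [Fintype F] {S : Set (Submodule F (Fin 4 → F))}
    [Fintype S] (hS : PartialSpread S) {π : Submodule F (Fin 4 → F)} (hπ : finrank F π = 3) :
    (#{v ∈ uncovered S | v ∈ π} : ℤ) =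
      (Fintype.card F : ℤ) ^ 3 - 1 - Fintype.card S * ((Fintype.card F : ℤ) - 1)
        - #{W : S | (W : Submodule F (Fin 4 → F)) ≤ π} *
          ((Fintype.card F : ℤ) ^ 2 - Fintype.card F) := by
  have hcount := congrArg (Nat.cast : ℕ → ℤ)
    (sum_card_punctured_inf_add_card_uncovered S hS.pairwise_inf_eq_bot π)
  push_cast at hcount
  rw [sum_congr rfl fun W _ => card_punctured_inf_plane (hS.1 W.1 W.2) hπ, sum_add_distrib,
    ← sum_filter, sum_const, sum_const, card_univ, nsmul_eq_mul, nsmul_eq_mul, card_punctured,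
    hπ] at hcount
  linear_combination hcount

open Classical in
theorem PartialSpread.uncovered_subset_plane [Fintype F] {S : Set (Submodule F (Fin 4 → F))}
    (hS : PartialSpread S) (hN : Nat.card S = Fintype.card F ^ 2) {π : Submodule F (Fin 4 → F)}
    (hπ : finrank F π = 3) (hq : Fintype.card F ≤ #{v ∈ uncovered S | v ∈ π}) :
    ∀ v ∈ uncovered S, v ∈ π := by
  have := Fintype.ofFinite S
  rw [Nat.card_eq_fintype_card] at hN
  have hq2 : (2 : ℤ) ≤ Fintype.card F := by exact_mod_cast Fintype.one_lt_card
  have hq' : (Fintype.card F : ℤ) ≤ #{v ∈ uncovered S | v ∈ π} := by exact_mod_cast hq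
  have h := hS.card_uncovered
  have hπc := hS.card_uncovered_inf_plane hπ
  rw [hN] at h hπc
  push_cast at h hπc
  set m := #{W : S | (W : Submodule F (Fin 4 → F)) ≤ π}
  have hm : m = 0 := by
    by_contra hm
    have hm1 : (1 : ℤ) ≤ m := by exact_mod_cast Nat.one_le_iff_ne_zero.mpr hm
    have hgap : (0 : ℤ) ≤ (Fintype.card F : ℤ) ^ 2 - Fintype.card F := by nlinarith
    nlinarith [mul_le_mul_of_nonneg_right hm1 hgap]
  have hcard : #{v ∈ uncovered S | v ∈ π} = #(uncovered S) := by
    have : (#{v ∈ uncovered S | v ∈ π} : ℤ) = #(uncovered S) := by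
      rw [h, hπc, hm]
      ring
    exact_mod_cast this
  exact filter_eq_self.mp (eq_of_subset_of_card_le (filter_subset _ _) hcard.ge)

theorem PartialSpread.uncovered_subset_span_pair [Fintype F] {S : Set (Submodule F (Fin 4 → F))}
    (hS : PartialSpread S) (hN : Nat.card S = Fintype.card F ^ 2) {u v : Fin 4 → F}
    (hu : u ∈ uncovered S) (hv : v ∈ uncovered S) (hvu : v ∉ F ∙ u) :
    ∀ x ∈ uncovered S, x ∈ (F ∙ u) ⊔ (F ∙ v) := by
  classical
  have hplane (π : Submodule F (Fin 4 → F)) (hπ : finrank F π = 3)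
      (huv : (F ∙ u) ⊔ (F ∙ v) ≤ π) : ∀ x ∈ uncovered S, x ∈ π := by
    refine hS.uncovered_subset_plane hN hπ ?_
    have hsub : insert v (punctured (F ∙ u)) ⊆ {x ∈ uncovered S | x ∈ π} := by
      refine insert_subset (mem_filter.mpr ⟨hv, huv (Submodule.mem_sup_right ?_)⟩)
        fun x hx => ?_
      · exact Submodule.mem_span_singleton_self v
      · exact mem_filter.mpr ⟨punctured_span_singleton_subset_uncovered hu hx,
          huv (Submodule.mem_sup_left (mem_punctured.mp hx).1)⟩
    have hv' : v ∉ punctured (F ∙ u) := fun h => hvu (mem_punctured.mp h).1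
    calc Fintype.card F = #(insert v (punctured (F ∙ u))) := by
          zify
          rw [card_insert_of_notMem hv', Nat.cast_add, card_punctured,
            finrank_span_singleton (mem_uncovered.mp hu).1]
          ring
      _ ≤ _ := card_le_card hsub
  intro x hx
  by_contra hxL
  obtain ⟨π, hπ, hLπ, hxπ⟩ := exists_hyperplane_le_notMem hxL
  exact hxπ (hplane π (by rw [finrank_fin_fun] at hπ; omega) hLπ x hx)

theorem PartialSpread.exists_line_punctured_eq_uncovered [Fintype F]
    {S : Set (Submodule F (Fin 4 → F))} (hS : PartialSpread S)
    (hN : Nat.card S = Fintype.card F ^ 2) :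
    ∃ L, IsLine L ∧ punctured L = uncovered S := by
  have := Fintype.ofFinite S
  have hq2 : (2 : ℤ) ≤ Fintype.card F := by exact_mod_cast Fintype.one_lt_card
  have huncov : (#(uncovered S) : ℤ) = (Fintype.card F : ℤ) ^ 2 - 1 := by
    rw [Nat.card_eq_fintype_card] at hN
    rw [hS.card_uncovered, hN]
    push_cast
    ring
  obtain ⟨u, hu⟩ : (uncovered S).Nonempty := by
    rw [← card_pos, ← Nat.cast_pos (α := ℤ), huncov]
    nlinarith
  have hu0 := (mem_uncovered.mp hu).1
  obtain ⟨v, hv, hvu⟩ : ∃ v ∈ uncovered S, v ∉ F ∙ u := by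
    by_contra! h
    have hsub : uncovered S ⊆ punctured (F ∙ u) :=
      fun v hv => mem_punctured.mpr ⟨h v hv, (mem_uncovered.mp hv).1⟩
    have hle : (#(uncovered S) : ℤ) ≤ #(punctured (F ∙ u)) := by
      exact_mod_cast card_le_card hsub
    rw [huncov, card_punctured, finrank_span_singleton hu0] at hle
    nlinarith
  have hL : IsLine ((F ∙ u) ⊔ (F ∙ v)) := by
    rw [IsLine, Submodule.finrank_sup_span_singleton hvu, finrank_span_singleton hu0]
  have hsub : uncovered S ⊆ punctured ((F ∙ u) ⊔ (F ∙ v)) := fun x hx =>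
    mem_punctured.mpr ⟨hS.uncovered_subset_span_pair hN hu hv hvu x hx, (mem_uncovered.mp hx).1⟩
  refine ⟨_, hL, (eq_of_subset_of_card_le hsub ?_).symm⟩
  rw [← Nat.cast_le (α := ℤ), card_punctured, show finrank F _ = 2 from hL, huncov]

theorem IsMaxPartialSpread.mem_of_forall_inf_eq_bot {S : Set (Submodule F (Fin 4 → F))}
    (hS : IsMaxPartialSpread S) {L : Submodule F (Fin 4 → F)} (hL : IsLine L)
    (hskew : ∀ W ∈ S, L ⊓ W = ⊥) : L ∈ S := by
  have hins : PartialSpread (insert L S) := by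
    refine ⟨fun W hW => ?_, fun W hW W' hW' hne => ?_⟩
    · rcases hW with rfl | hW
      exacts [hL, hS.1.1 W hW]
    · rcases hW with rfl | hW <;> rcases hW' with rfl | hW'
      · exact absurd rfl hne
      · exact hskew W' hW'
      · rw [inf_comm]; exact hskew W hW
      · exact hS.1.2 W hW W' hW' hne
  exact hS.2 _ hins (Set.subset_insert L S) ▸ Set.mem_insert L S

theorem IsMaxPartialSpread.card_ne_sq [Fintype F] {S : Set (Submodule F (Fin 4 → F))}
    (hS : IsMaxPartialSpread S) : Nat.card S ≠ Fintype.card F ^ 2 := by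
  intro hN
  obtain ⟨L, hL, hLeq⟩ := hS.1.exists_line_punctured_eq_uncovered hN
  have hskew : ∀ W ∈ S, L ⊓ W = ⊥ := fun W hW => (Submodule.eq_bot_iff _).mpr fun x hx => by
    by_contra hx0
    have hxu : x ∈ uncovered S := hLeq ▸ mem_punctured.mpr ⟨hx.1, hx0⟩
    exact (mem_uncovered.mp hxu).2 W hW hx.2
  have hbot : L = ⊥ := by simpa using hskew L (hS.mem_of_forall_inf_eq_bot hL hskew)
  rw [IsLine, hbot, finrank_bot] at hL
  omega

theorem PartialSpread.card_le_sq_of_not_covers [Fintype F] {S : Set (Submodule F (Fin 4 → F))}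
    (hS : PartialSpread S) (hcov : ¬ Covers S) : Nat.card S ≤ Fintype.card F ^ 2 := by
  have := Fintype.ofFinite S
  obtain ⟨v, hv0, hv⟩ : ∃ v : Fin 4 → F, v ≠ 0 ∧ ∀ W ∈ S, v ∉ W := by
    simpa [Covers] using hcov
  have hpos : (1 : ℤ) ≤ #(uncovered S) := by
    exact_mod_cast card_pos.mpr ⟨v, mem_uncovered.mpr ⟨hv0, hv⟩⟩
  have hq2 : (2 : ℤ) ≤ Fintype.card F := by exact_mod_cast Fintype.one_lt_card
  have h := hS.card_uncovered
  rw [Nat.card_eq_fintype_card, ← Nat.cast_le (α := ℤ)]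
  push_cast
  by_contra! hlt
  nlinarith [mul_le_mul_of_nonneg_right (Int.add_one_le_iff.mpr hlt)
    (by nlinarith : (0 : ℤ) ≤ Fintype.card F ^ 2 - 1)]

end PartialSpread

/-- A maximal partial spread that is not a spread has size at most q² − 1;
in particular no maximal partial spread has size exactly q². -/
theorem maximal_not_spread_card (q : ℕ) (hq : q = Fintype.card K)
    (S : Set (Submodule K (Fin 4 → K))) (hS : IsMaxPartialSpread S) :
    (¬ Covers S → Nat.card S ≤ q ^ 2 - 1) ∧ Nat.card S ≠ q ^ 2 := by
  subst hq
  have hne := hS.card_ne_sq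
  exact ⟨fun hcov => by have := hS.1.card_le_sq_of_not_covers hcov; omega, hne⟩
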